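/- arXiv:1506.00830 — 2 statements merged into one kernel-verified Lean document; each statement's English description precedes it below -/
import Mathlib

section
/- Let p_a(x) = s_a(x_1²,...,x_n²) for a = 1,...,n−1 and p_n(x) = x_1 x_2 ⋯ x_n be the standard basic invariants of D_n. Then for all a = 1,...,n−1 and all x ∈ ℝ^n: ∇p_a(x)·∇p_n(x) = 2(n−a+1)·p_{a−1}(x)·p_n(x) (with p_0 = 1), and ∇p_n(x)·∇p_n(x) = p_{n−1}(x). -/
/-!
Write `eₖ` for the elementary symmetric polynomials and `y = x²`. By the chain rule
`∂ⱼ pₐ(x) = 2 xⱼ (∂ⱼ eₐ)(y)`, and by Euler's identity for a monomial `xⱼ ∂ⱼ pₙ = pₙ`,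
so `∇pₐ·∇pₙ = 2 pₙ (∑ⱼ ∂ⱼ eₐ)(y)`. Since `pₙ = eₙ` and `∂ⱼ pₙ` is a squarefree
monomial, `(∂ⱼ pₙ(x))² = (∂ⱼ eₙ)(y)`, so `∇pₙ·∇pₙ = (∑ⱼ ∂ⱼ eₙ)(y)`. Both entries then
follow from `∑ⱼ ∂ⱼ eₖ₊₁ = (n - k) eₖ`: each `k`-subset of the variables extends to a
`(k+1)`-subset in `n - k` ways.
-/

open MvPolynomial Finset

/-- `sₐ(x₁², …, xₙ²)`, the `Bₙ`-type basic invariants (used for `a ≤ n-1` in type `Dₙ`). -/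
noncomputable def BnInvariant (n c : ℕ) : MvPolynomial (Fin n) ℝ :=
  bind₁ (fun i : Fin n => (X i : MvPolynomial (Fin n) ℝ) ^ 2) (esymm (Fin n) ℝ c)

/-- The last basic invariant of `Dₙ`: the product of all the coordinates. -/
noncomputable def DnLastInvariant (n : ℕ) : MvPolynomial (Fin n) ℝ :=
  ∏ i : Fin n, X i

namespace Finset

theorem sum_filter_mem_powersetCard_succ {σ M : Type*} [DecidableEq σ] [Fintype σ]
    [AddCommMonoid M] (k : ℕ) (i : σ) (f : Finset σ → M) :
    ∑ s ∈ powersetCard (k + 1) univ with i ∈ s, f (s.erase i) =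
      ∑ t ∈ powersetCard k univ with i ∉ t, f t := by
  refine sum_nbij' (·.erase i) (insert i) ?_ ?_ ?_ ?_ fun _ _ => rfl
  all_goals intro s hs; simp_all [card_erase_of_mem, card_insert_of_notMem]

end Finset

namespace MvPolynomial

variable {R σ τ : Type*} [CommSemiring R]

theorem pderiv_prod_X [DecidableEq σ] (i : σ) (s : Finset σ) :
    pderiv i (∏ j ∈ s, (X j : MvPolynomial σ R)) =
      if i ∈ s then ∏ j ∈ s.erase i, X j else 0 := by
  induction s using Finset.induction_on with
  | empty => simp
  | insert k s hk ih =>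
    rw [prod_insert hk, Derivation.leibniz, ih, pderiv_X]
    by_cases hik : i = k
    · subst hik
      simp [hk, erase_insert hk]
    · by_cases his : i ∈ s
      · rw [erase_insert_of_ne (Ne.symm hik), prod_insert fun h => hk (mem_of_mem_erase h)]
        simp [his, hik]
      · simp [his, hik]

theorem pderiv_bind₁ [Fintype σ] (f : σ → MvPolynomial τ R) (j : τ)
    (p : MvPolynomial σ R) :
    pderiv j (bind₁ f p) = ∑ i, bind₁ f (pderiv i p) * pderiv j (f i) := by
  classical
  induction p using MvPolynomial.induction_on with
  | C a => simp
  | add p q hp hq => simp only [map_add, hp, hq, add_mul, sum_add_distrib]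
  | mul_X p k hp =>
    simp [Derivation.leibniz, hp, pderiv_X, Pi.single_apply, add_mul, sum_add_distrib, mul_sum,
      apply_ite (bind₁ f), ite_mul, mul_assoc]

theorem eval_bind₁ (x : τ → R) (f : σ → MvPolynomial τ R) (p : MvPolynomial σ R) :
    eval x (bind₁ f p) = eval (fun i => eval x (f i)) p :=
  eval₂Hom_bind₁ _ _ _ _

theorem esymm_card [Fintype σ] : esymm σ R (Fintype.card σ) = ∏ i, X i := by
  rw [esymm, ← card_univ, powersetCard_self, sum_singleton]

theorem sum_pderiv_esymm_succ [Fintype σ] (k : ℕ) :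
    ∑ i, pderiv i (esymm σ R (k + 1)) = (Fintype.card σ - k) • esymm σ R k := by
  classical
  calc ∑ i, pderiv i (esymm σ R (k + 1))
      = ∑ i, ∑ s ∈ powersetCard (k + 1) univ with i ∈ s, ∏ j ∈ s.erase i, X j := by
        simp only [esymm, map_sum, pderiv_prod_X, sum_ite, sum_const_zero, add_zero]
    _ = ∑ i, ∑ t ∈ powersetCard k univ with i ∉ t, ∏ j ∈ t, X j :=
        sum_congr rfl fun i _ => sum_filter_mem_powersetCard_succ k i (∏ j ∈ ·, X j)
    _ = ∑ t ∈ powersetCard k univ, (Fintype.card σ - k) • ∏ j ∈ t, X j := by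
        simp only [sum_filter]
        rw [sum_comm]
        refine sum_congr rfl fun t ht => ?_
        rw [← sum_filter, sum_const, filter_notMem_eq_sdiff, card_univ_sdiff,
          mem_powersetCard_univ.1 ht]
    _ = (Fintype.card σ - k) • esymm σ R k := by rw [esymm, smul_sum]

theorem X_mul_pderiv_prod_X [Fintype σ] (i : σ) :
    X i * pderiv i (∏ j, (X j : MvPolynomial σ R)) = ∏ j, X j := by
  classical
  rw [pderiv_prod_X, if_pos (mem_univ i), mul_prod_erase _ _ (mem_univ i)]

end MvPolynomial

section

variable {n : ℕ}

theorem eval_BnInvariant (c : ℕ) (x : Fin n → ℝ) :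
    eval x (BnInvariant n c) = eval (x ^ 2) (esymm (Fin n) ℝ c) := by
  simp only [BnInvariant, eval_bind₁, map_pow, eval_X]
  rfl

theorem eval_pderiv_BnInvariant (c : ℕ) (x : Fin n → ℝ) (j : Fin n) :
    eval x (pderiv j (BnInvariant n c)) =
      2 * x j * eval (x ^ 2) (pderiv j (esymm (Fin n) ℝ c)) := by
  rw [BnInvariant, pderiv_bind₁, sum_eq_single j]
  · rw [map_mul, eval_bind₁, pderiv_pow, pderiv_X_self]
    simp only [map_mul, map_pow, eval_X, map_natCast, map_one, ← Pi.pow_def]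
    norm_num
    ring
  · intro i _ hij
    simp [pderiv_X_of_ne hij]
  · simp

theorem DnLastInvariant_eq_esymm : DnLastInvariant n = esymm (Fin n) ℝ n := by
  rw [DnLastInvariant, ← esymm_card, Fintype.card_fin]

theorem eval_pderiv_DnLastInvariant_sq (x : Fin n → ℝ) (j : Fin n) :
    eval x (pderiv j (DnLastInvariant n)) ^ 2 = eval (x ^ 2) (pderiv j (DnLastInvariant n)) := by
  simp [DnLastInvariant, pderiv_prod_X, prod_pow]

end

/-- The last row/column and corner entries of the `P`-matrix of `Dₙ`:
`∇pₐ·∇pₙ = 2(n-a+1)·p_{a-1}·pₙ` for `a = 1, …, n-1`, and `∇pₙ·∇pₙ = p_{n-1}`. -/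
theorem Dn_P_matrix_last_row (n a : ℕ) (ha : 1 ≤ a) (han : a ≤ n - 1) (x : Fin n → ℝ) :
    (∑ j : Fin n,
        eval x (pderiv j (BnInvariant n a)) * eval x (pderiv j (DnLastInvariant n)))
        = ((2 * (n - a + 1) : ℕ) : ℝ) * eval x (BnInvariant n (a - 1)) *
            eval x (DnLastInvariant n)
    ∧ (∑ j : Fin n, eval x (pderiv j (DnLastInvariant n)) *
          eval x (pderiv j (DnLastInvariant n)))
        = eval x (BnInvariant n (n - 1)) := by
  obtain ⟨k, rfl⟩ : ∃ k, a = k + 1 := ⟨a - 1, by omega⟩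
  obtain ⟨m, rfl⟩ : ∃ m, n = m + 1 := ⟨n - 1, by omega⟩
  constructor
  · calc ∑ j, eval x (pderiv j (BnInvariant _ (k + 1))) * eval x (pderiv j (DnLastInvariant _))
        = ∑ j, 2 * eval (x ^ 2) (pderiv j (esymm (Fin (m + 1)) ℝ (k + 1))) *
            eval x (X j * pderiv j (DnLastInvariant _)) := by
          refine sum_congr rfl fun j _ => ?_
          rw [eval_pderiv_BnInvariant, map_mul, eval_X]
          ring
      _ = 2 * eval (x ^ 2) (∑ j, pderiv j (esymm (Fin (m + 1)) ℝ (k + 1))) *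
            eval x (DnLastInvariant _) := by
          simp only [DnLastInvariant, X_mul_pderiv_prod_X, map_sum, mul_sum, sum_mul]
      _ = _ := by
          rw [sum_pderiv_esymm_succ, map_nsmul, eval_BnInvariant, Fintype.card_fin,
            show m + 1 - (k + 1) + 1 = m + 1 - k by omega, nsmul_eq_mul, Nat.add_sub_cancel]
          push_cast
          ring
  · simp only [← sq, eval_pderiv_DnLastInvariant_sq, ← map_sum]
    rw [DnLastInvariant_eq_esymm, sum_pderiv_esymm_succ, Fintype.card_fin, Nat.add_sub_cancel_left,
      one_smul, Nat.add_sub_cancel, eval_BnInvariant]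
end

section
/- For the elementary symmetric polynomials s_1,...,s_n in n variables and any a with 2 ≤ a ≤ n, the identity 2·Σ_{1≤i<j≤n} (s_{a−2} evaluated at the n−2 variables {x_1,...,x_n} \ {x_i,x_j}) = (n−a+2)(n−a+1)·s_{a−2}(x_1,...,x_n) holds, where s_0 = 1 and s_{−1} = 0. -/
open MvPolynomial Finset

/-- The `k`-th elementary symmetric polynomial in the variables indexed by a
finite set `s` of indices. -/
noncomputable def esymmOn (n : ℕ) (s : Finset (Fin n)) (k : ℕ) : MvPolynomial (Fin n) ℝ :=
  ∑ t ∈ Finset.powersetCard k s, ∏ i ∈ t, X i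

/-- Combinatorial identity underlying the `λ`-vector of `Sₙ`:
`2·Σ_{i<j} s_{a-2}({x₁,…,xₙ} \ {xᵢ,xⱼ}) = (n-a+2)(n-a+1)·s_{a-2}(x₁,…,xₙ)`. -/
theorem esymm_pair_deletion_identity (n a : ℕ) (ha : 2 ≤ a) (han : a ≤ n) :
    (2 : MvPolynomial (Fin n) ℝ) *
        ∑ i : Fin n, ∑ j ∈ Finset.Ioi i, esymmOn n (Finset.univ \ {i, j}) (a - 2)
      = C (((n - a + 2) * (n - a + 1) : ℕ) : ℝ) * esymm (Fin n) ℝ (a - 2) := by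
  set k := a - 2 with hk
  -- Step 1: symmetrize
  have h1 : (2 : MvPolynomial (Fin n) ℝ) *
        ∑ i : Fin n, ∑ j ∈ Finset.Ioi i, esymmOn n (Finset.univ \ {i, j}) k
      = ∑ i : Fin n, ∑ j ∈ ({i}ᶜ : Finset (Fin n)), esymmOn n (Finset.univ \ {i, j}) k := by
    have h := Finset.sum_sum_Ioi_add_eq_sum_sum_off_diag
        (fun j i => esymmOn n (Finset.univ \ {i, j}) k)
    beta_reduce at h
    have pre : (2 : MvPolynomial (Fin n) ℝ) *
          ∑ i : Fin n, ∑ j ∈ Finset.Ioi i, esymmOn n (Finset.univ \ {i, j}) k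
        = ∑ i : Fin n, ∑ j ∈ Finset.Ioi i,
            (esymmOn n (Finset.univ \ {i, j}) k + esymmOn n (Finset.univ \ {j, i}) k) := by
      rw [two_mul, ← Finset.sum_add_distrib]
      refine Finset.sum_congr rfl fun i _ => ?_
      rw [← Finset.sum_add_distrib]
      refine Finset.sum_congr rfl fun j _ => ?_
      rw [Finset.pair_comm j i]
    exact pre.trans (h.trans (Finset.sum_congr rfl fun i _ =>
      Finset.sum_congr (by ext x; simp) fun j _ => rfl))
  rw [h1]
  -- Step 2: rewrite each esymmOn as a filtered sum over powersetCard k univ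
  have h2 : ∀ i j : Fin n, esymmOn n (Finset.univ \ {i, j}) k
      = ∑ t ∈ Finset.powersetCard k (Finset.univ : Finset (Fin n)),
          if i ∉ t ∧ j ∉ t then ∏ x ∈ t, X x else 0 := by
    intro i j
    rw [esymmOn, ← Finset.sum_filter]
    congr 1
    ext t
    simp only [Finset.mem_filter, Finset.mem_powersetCard, Finset.subset_iff,
      Finset.mem_sdiff, Finset.mem_univ, Finset.mem_insert, Finset.mem_singleton, true_and]
    constructor
    · rintro ⟨h, hc⟩
      exact ⟨⟨fun x hx => trivial, hc⟩, fun hi => (h hi) (Or.inl rfl),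
        fun hj => (h hj) (Or.inr rfl)⟩
    · rintro ⟨⟨_, hc⟩, hi, hj⟩
      refine ⟨fun x hx h => ?_, hc⟩
      rcases h with rfl | rfl
      · exact hi hx
      · exact hj hx
  simp_rw [h2]
  -- Step 3: swap the sums so that t is outermost
  have h3 : (∑ i : Fin n, ∑ j ∈ ({i}ᶜ : Finset (Fin n)),
        ∑ t ∈ Finset.powersetCard k (Finset.univ : Finset (Fin n)),
          if i ∉ t ∧ j ∉ t then ∏ x ∈ t, X x else 0)
      = ∑ t ∈ Finset.powersetCard k (Finset.univ : Finset (Fin n)),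
          ∑ i : Fin n, ∑ j ∈ ({i}ᶜ : Finset (Fin n)),
            if i ∉ t ∧ j ∉ t then (∏ x ∈ t, X x : MvPolynomial (Fin n) ℝ) else 0 := by
    rw [Finset.sum_comm]
    refine Finset.sum_congr rfl fun t _ => Finset.sum_comm
  rw [show (∑ i : Fin n, ∑ j ∈ ({i}ᶜ : Finset (Fin n)),
        ∑ t ∈ Finset.powersetCard k (Finset.univ : Finset (Fin n)),
          if i ∉ t ∧ j ∉ t then ∏ x ∈ t, X x else 0)
      = ∑ i : Fin n, ∑ t ∈ Finset.powersetCard k (Finset.univ : Finset (Fin n)),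
          ∑ j ∈ ({i}ᶜ : Finset (Fin n)),
            if i ∉ t ∧ j ∉ t then (∏ x ∈ t, X x : MvPolynomial (Fin n) ℝ) else 0
      from Finset.sum_congr rfl fun i _ => Finset.sum_comm, Finset.sum_comm]
  -- Step 4: count, for each fixed t, the pairs (i,j)
  have h4 : ∀ t ∈ Finset.powersetCard k (Finset.univ : Finset (Fin n)),
      (∑ i : Fin n, ∑ j ∈ ({i}ᶜ : Finset (Fin n)),
          if i ∉ t ∧ j ∉ t then (∏ x ∈ t, X x : MvPolynomial (Fin n) ℝ) else 0)
      = ((n - k) * (n - k - 1) : ℕ) • ∏ x ∈ t, X x := by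
    intro t ht
    rw [Finset.mem_powersetCard] at ht
    have hct : t.card = k := ht.2
    have hinner : ∀ i : Fin n,
        (∑ j ∈ ({i}ᶜ : Finset (Fin n)),
            if i ∉ t ∧ j ∉ t then (∏ x ∈ t, X x : MvPolynomial (Fin n) ℝ) else 0)
        = if i ∉ t then ((n - k - 1 : ℕ) • ∏ x ∈ t, X x) else 0 := by
      intro i
      by_cases hi : i ∈ t
      · simp [hi]
      · simp only [hi, not_false_iff, true_and, if_true]
        rw [Finset.sum_ite, Finset.sum_const_zero, add_zero, Finset.sum_const]
        congr 1
        rw [← Finset.sdiff_eq_filter, Finset.card_sdiff_of_subset, Finset.card_compl, hct]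
        · simp [Fintype.card_fin]
          omega
        · intro x hx
          simp only [Finset.mem_compl, Finset.mem_singleton]
          rintro rfl; exact hi hx
    simp_rw [hinner]
    rw [Finset.sum_ite, Finset.sum_const_zero, add_zero, Finset.sum_const]
    rw [← smul_assoc, smul_eq_mul]
    congr 1
    have : (Finset.univ.filter (fun i => i ∉ t)) = tᶜ := by
      ext x; simp
    rw [this, Finset.card_compl, hct, Fintype.card_fin]
  rw [Finset.sum_congr rfl h4, ← Finset.smul_sum]
  have hcoef : (n - a + 2) * (n - a + 1) = (n - k) * (n - k - 1) := by
    rw [hk]; congr 1 <;> omega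
  rw [hcoef, esymm, nsmul_eq_mul]
  congr 1
end
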